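/- Suppose reals I₁,…,Iₙ, I₀, V₀, ω, v with |v|<1, γ = 1/√(1−v²) satisfy ω² I₀ = ((n−2)/n)·(I₁+⋯+Iₙ) + V₀ and I₁ = I₂ = ⋯ = Iₙ. Let E₀ = I₁+⋯+Iₙ + ω² I₀ + V₀ and E_v = (1/γ)( (I₂+⋯+Iₙ) + γ²(v²+1)(I₁ + ω² I₀) + V₀ ). Then E_v = E₀/√(1−v²). -/
import Mathlib


theorem energy_momentum_relation_energy (n : ℕ) (hn : 1 ≤ n)
    (I : ℕ → ℝ) (I₀ V₀ ω v γ E₀ Ev : ℝ)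
    (hv : |v| < 1) (hγ : γ = 1 / Real.sqrt (1 - v ^ 2))
    (hpokh : ω ^ 2 * I₀ = (((n : ℝ) - 2) / n) * (∑ k ∈ Finset.Icc 1 n, I k) + V₀)
    (hsym : ∀ k ∈ Finset.Icc 1 n, I k = I 1)
    (hE₀ : E₀ = (∑ k ∈ Finset.Icc 1 n, I k) + ω ^ 2 * I₀ + V₀)
    (hEv : Ev = (1 / γ) * ((∑ k ∈ Finset.Icc 2 n, I k)
      + γ ^ 2 * (v ^ 2 + 1) * (I 1 + ω ^ 2 * I₀) + V₀)) :
    Ev = E₀ / Real.sqrt (1 - v ^ 2) := by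
  have hv2 : (0:ℝ) < 1 - v ^ 2 := by
    have := (abs_lt.mp hv)
    nlinarith [sq_abs v, abs_nonneg v]
  have hs : 0 < Real.sqrt (1 - v ^ 2) := Real.sqrt_pos.mpr hv2
  have hsq : Real.sqrt (1 - v ^ 2) ^ 2 = 1 - v ^ 2 := Real.sq_sqrt hv2.le
  have hγpos : 0 < γ := by rw [hγ]; positivity
  have hγ2 : γ ^ 2 = 1 / (1 - v ^ 2) := by
    rw [hγ, div_pow, one_pow, hsq]
  have hn0 : (n : ℝ) ≠ 0 := by positivity
  have h1 : ∑ k ∈ Finset.Icc 1 n, I k = n * I 1 := by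
    rw [Finset.sum_congr rfl hsym, Finset.sum_const, Nat.card_Icc]
    simp [nsmul_eq_mul]
  have h2 : ∑ k ∈ Finset.Icc 2 n, I k = ((n : ℝ) - 1) * I 1 := by
    rw [Finset.sum_congr rfl (fun k hk => hsym k ?_), Finset.sum_const, Nat.card_Icc]
    · have : ((n + 1 - 2 : ℕ) : ℝ) = (n : ℝ) - 1 := by
        have : n + 1 - 2 = n - 1 := by omega
        rw [this, Nat.cast_sub hn]; simp
      rw [nsmul_eq_mul, this]
    · simp only [Finset.mem_Icc] at hk ⊢; omega
  have hpokh' : ω ^ 2 * I₀ = ((n : ℝ) - 2) * I 1 + V₀ := by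
    rw [hpokh, h1]; field_simp
  have hE₀' : E₀ = (2 * (n : ℝ) - 2) * I 1 + 2 * V₀ := by
    rw [hE₀, h1, hpokh']; ring
  have hid : γ ^ 2 * (1 - v ^ 2) = 1 := by rw [hγ2]; field_simp
  have hγs : Real.sqrt (1 - v ^ 2) = 1 / γ := by rw [hγ]; field_simp
  rw [hEv, hE₀', h2, hpokh', hγs]
  field_simp
  linear_combination (-(((n:ℝ) - 1) * I 1 + V₀)) * hid
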